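/- arXiv:2502.19926 — 3 statements merged into one kernel-verified Lean document; each statement's English description precedes it below -/
import Mathlib

section
/- A binary word C is central if and only if the words 0C1 and 1C0 are conjugates. -/
/-- A word is primitive if it is not a proper power: `w = v^n` implies `n = 1`. -/
def Primitive {α : Type*} (w : List α) : Prop :=
  ∀ (v : List α) (n : ℕ), w = (List.replicate n v).flatten → n = 1

/-- A Lyndon word: nonempty and lexicographically strictly smaller than all
its proper nonempty suffixes. -/
def Lyndon {α : Type*} [LinearOrder α] (w : List α) : Prop :=
  w ≠ [] ∧ ∀ u v : List α, w = u ++ v → u ≠ [] → v ≠ [] → List.Lex (· < ·) w v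

/-- A Lyndon word for the reversed order `1 < 0` on `Bool`. -/
def LyndonRev (w : List Bool) : Prop :=
  w ≠ [] ∧ ∀ u v : List Bool, w = u ++ v → u ≠ [] → v ≠ [] → List.Lex (· > ·) w v

/-- A binary word is balanced if the numbers of `1`s in any two factors of the
same length differ by at most 1. (`false` plays the role of `0`, `true` of `1`.) -/
def Balanced01 (w : List Bool) : Prop :=
  ∀ u v : List Bool, u <:+: w → v <:+: w → u.length = v.length →
    (u.count true : ℤ) - (v.count true : ℤ) ≤ 1

/-- `w` has period `p`: `w[i] = w[i+p]` for all valid indices. -/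
def HasPeriod (w : List Bool) (p : ℕ) : Prop :=
  ∀ i : ℕ, i + p < w.length → w[i]? = w[i + p]?

/-- A central word: it has coprime periods `p`, `q` and length `p + q - 2`. -/
def Central (w : List Bool) : Prop :=
  ∃ p q : ℕ, Nat.Coprime p q ∧ HasPeriod w p ∧ HasPeriod w q ∧ w.length + 2 = p + q

/-- The lower Christoffel word of slope `b/a`: letter `i` is `1` (`true`) iff the
line `y = bx/(a+b)`... encoded via floor differences `⌊(i+1)b/(a+b)⌋ - ⌊ib/(a+b)⌋`. -/
def chr (a b : ℕ) : List Bool :=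
  List.ofFn (fun i : Fin (a + b) =>
    decide ((i : ℕ) * b / (a + b) < ((i : ℕ) + 1) * b / (a + b)))

/-- An (upward) digitally convex word: all factors of its Lyndon factorization
(for the order `0 < 1`) are balanced Lyndon words, i.e. primitive lower
Christoffel words. -/
def DC (w : List Bool) : Prop :=
  ∃ L : List (List Bool), L.flatten = w ∧ (∀ x ∈ L, Lyndon x ∧ Balanced01 x) ∧
    L.Chain' (fun a b => ¬ List.Lex (· < ·) a b)

/-- A downward digitally convex word: all factors of its Lyndon factorization
for the order `1 < 0` are balanced. -/
def DCdown (w : List Bool) : Prop :=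
  ∃ L : List (List Bool), L.flatten = w ∧ (∀ x ∈ L, LyndonRev x ∧ Balanced01 x) ∧
    L.Chain' (fun a b => ¬ List.Lex (· > ·) a b)

/-- `(u, v)` is the standard factorization of `u ++ v`: both parts nonempty and
`v` is the lexicographically least proper nonempty suffix of `u ++ v`. -/
def StdFact (u v : List Bool) : Prop :=
  u ≠ [] ∧ v ≠ [] ∧
    ∀ s : List Bool, s ≠ [] → s ≠ u ++ v → s <:+ u ++ v →
      s = v ∨ List.Lex (· < ·) v s

/-- A word is unbordered if it has no nonempty proper border. -/
def Unbordered (w : List Bool) : Prop :=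
  ∀ u : List Bool, u <+: w → u <:+ w → u ≠ w → u = []

/-!
Both sides say that `C` is a power of a letter or `C = P01Q = Q10P`; for conjugacy this is read
off by cutting `0C1 = (0P0)(1Q1)` and `1C0 = (1Q1)(0P0)`.

A word `P01Q = Q10P` has the borders `P` and `Q`, hence the periods `|P| + 2` and `|Q| + 2` and
length two less than their sum. The periods are coprime: by Fine and Wilf a common divisor `d ≥ 2`
would also be a period, but `d` divides `|Q| - |P|` while the word reads `0` at `|P|` and `1` at
`|Q|`. Conversely, the two periods of a central word give borders with `C = P x y Q = Q x' y' P`.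
If `x = x'` (or `y = y'`), then `C x` (or `y C`) keeps both periods and reaches length `p + q - 1`,
so it has period `1` by Fine and Wilf; otherwise counting `1`s rules out `x = y`, leaving
`C = P01Q = Q10P` up to swapping `P` and `Q`.
-/

open List hiding HasPeriod

theorem hasPeriod_iff_list_hasPeriod {w : List Bool} {p : ℕ} :
    HasPeriod w p ↔ w.HasPeriod p := by
  rw [List.hasPeriod_iff_getElem?]
  exact forall_congr' fun i => ⟨fun h hi => h (by omega), fun h hi => h (by omega)⟩

theorem hasPeriod_of_eq_append {w u s t : List Bool} (hs : w = u ++ s) (ht : w = t ++ u) :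
    HasPeriod w t.length := by
  intro i hi
  have hu : i < u.length := by
    have := congrArg length ht
    simp only [length_append] at this
    omega
  subst hs
  rw [getElem?_append_left hu, ht, getElem?_append_right (by omega), Nat.add_sub_cancel]

namespace HasPeriod

variable {w : List Bool} {p q : ℕ}

theorem exists_eq_replicate_of_one (h : HasPeriod w 1) : ∃ c, w = replicate w.length c := by
  cases w with
  | nil => exact ⟨false, rfl⟩
  | cons c t =>
    refine ⟨c, ext_getElem? fun i => ?_⟩
    rw [getElem?_replicate]
    split_ifs with hi
    · rw [← (hasPeriod_iff_list_hasPeriod.1 h).getElem?_mod 1 i _ hi, Nat.mod_one]; rfl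
    · exact getElem?_eq_none (by omega)

theorem exists_eq_replicate_of_coprime (hp : HasPeriod w p) (hq : HasPeriod w q)
    (hpq : p.Coprime q) (hlen : p + q ≤ w.length + 1) : ∃ c, w = replicate w.length c := by
  have h := (hasPeriod_iff_list_hasPeriod.1 hp).gcd (hasPeriod_iff_list_hasPeriod.1 hq)
    (by rw [hpq.gcd_eq_one]; omega)
  rw [hpq.gcd_eq_one, ← hasPeriod_iff_list_hasPeriod] at h
  exact h.exists_eq_replicate_of_one

theorem exists_eq_take_append_cons_cons (h : HasPeriod w p) (hp : 2 ≤ p) (hpw : p ≤ w.length) :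
    ∃ x y, w = w.take (p - 2) ++ x :: y :: w.take (w.length - p) := by
  have hdrop : w.drop p = w.take (w.length - p) := by
    rw [prefix_iff_eq_take.1 ((hasPeriod_iff_list_hasPeriod.1 h).drop_prefix p), length_drop]
  obtain ⟨x, y, hxy⟩ : ∃ x y, (w.take p).drop (p - 2) = [x, y] :=
    length_eq_two.1 (by simp; omega)
  refine ⟨x, y, ?_⟩
  conv_lhs => rw [← take_append_drop p w, ← take_append_drop (p - 2) (w.take p), hxy, hdrop,
    take_take, Nat.min_eq_left (by omega)]
  simp

end HasPeriod

def IsCentralSplit (P Q C : List Bool) : Prop :=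
  C = P ++ false :: true :: Q ∧ C = Q ++ true :: false :: P

namespace IsCentralSplit

variable {P Q C : List Bool}

theorem length_eq (h : IsCentralSplit P Q C) : C.length = P.length + Q.length + 2 := by
  rw [h.1]; simp; omega

theorem hasPeriod_left (h : IsCentralSplit P Q C) : HasPeriod C (P.length + 2) := by
  simpa using hasPeriod_of_eq_append (t := P ++ [false, true]) h.2 (by simpa using h.1)

theorem hasPeriod_right (h : IsCentralSplit P Q C) : HasPeriod C (Q.length + 2) := by
  simpa using hasPeriod_of_eq_append (t := Q ++ [true, false]) h.1 (by simpa using h.2)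

theorem coprime (h : IsCentralSplit P Q C) : (P.length + 2).Coprime (Q.length + 2) := by
  set d := (P.length + 2).gcd (Q.length + 2)
  by_contra hd
  have hd2 : 2 ≤ d := by
    have : 0 < d := Nat.gcd_pos_of_pos_left _ (by omega)
    unfold Nat.Coprime at hd
    omega
  have hper : C.HasPeriod d := (hasPeriod_iff_list_hasPeriod.1 h.hasPeriod_left).gcd
    (hasPeriod_iff_list_hasPeriod.1 h.hasPeriod_right) (by rw [h.length_eq]; omega)
  have hmod : P.length % d = Q.length % d := by
    have h1 : (P.length + 2) % d = (Q.length + 2) % d := by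
      rw [Nat.mod_eq_zero_of_dvd (Nat.gcd_dvd_left _ _),
        Nat.mod_eq_zero_of_dvd (Nat.gcd_dvd_right _ _)]
    exact Nat.ModEq.add_right_cancel' 2 h1
  have hP : C[P.length]? = some false := by rw [h.1]; simp
  have hQ : C[Q.length]? = some true := by rw [h.2]; simp
  have hP' := hper.getElem?_mod d P.length C (by rw [h.length_eq]; omega)
  have hQ' := hper.getElem?_mod d Q.length C (by rw [h.length_eq]; omega)
  rw [hmod, hQ', hQ, hP] at hP'
  simp at hP'

theorem central (h : IsCentralSplit P Q C) : Central C :=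
  ⟨P.length + 2, Q.length + 2, h.coprime, h.hasPeriod_left, h.hasPeriod_right, by
    rw [h.length_eq]; omega⟩

end IsCentralSplit

theorem central_replicate (n : ℕ) (c : Bool) : Central (replicate n c) := by
  refine ⟨1, n + 1, Nat.coprime_one_left _, fun i hi => ?_, fun i hi => ?_, by simp; omega⟩
  · simp only [length_replicate] at hi
    rw [getElem?_replicate, getElem?_replicate, if_pos (by omega), if_pos (by omega)]
  · simp only [length_replicate] at hi
    omega

theorem eq_replicate_or_isCentralSplit_of_eq_append {C P Q : List Bool} {x y x' y' : Bool}
    (h₁ : C = P ++ x :: y :: Q) (h₂ : C = Q ++ x' :: y' :: P)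
    (hPQ : (P.length + 2).Coprime (Q.length + 2)) :
    (∃ c, C = replicate C.length c) ∨ ∃ P Q, IsCentralSplit P Q C := by
  have hlen : C.length = P.length + Q.length + 2 := by rw [h₁]; simp; omega
  by_cases hx : x = x'
  · subst hx
    obtain ⟨c, hc⟩ := HasPeriod.exists_eq_replicate_of_coprime (w := C ++ [x])
      (hasPeriod_of_eq_append (u := Q ++ [x]) (s := y' :: P ++ [x]) (t := P ++ [x, y])
        (by simp [h₂]) (by simp [h₁]))
      (hasPeriod_of_eq_append (u := P ++ [x]) (s := y :: Q ++ [x]) (t := Q ++ [x, y'])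
        (by simp [h₁]) (by simp [h₂]))
      (by simpa using hPQ) (by simp; omega)
    exact .inl ⟨c, (append_eq_replicate_iff.1 hc).2.1⟩
  by_cases hy : y = y'
  · subst hy
    obtain ⟨c, hc⟩ := HasPeriod.exists_eq_replicate_of_coprime (w := [y] ++ C)
      (hasPeriod_of_eq_append (u := y :: Q) (s := x' :: y :: P) (t := y :: P ++ [x])
        (by simp [h₂]) (by simp [h₁]))
      (hasPeriod_of_eq_append (u := y :: P) (s := x :: y :: Q) (t := y :: Q ++ [x'])
        (by simp [h₁]) (by simp [h₂]))
      (by simpa using hPQ) (by simp; omega)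
    exact .inl ⟨c, (append_eq_replicate_iff.1 hc).2.2⟩
  obtain rfl := Bool.eq_not_of_ne (Ne.symm hx)
  obtain rfl := Bool.eq_not_of_ne (Ne.symm hy)
  have hyx : y = !x := by
    have := congrArg (count true) (h₁.symm.trans h₂)
    cases x <;> cases y <;> simp at this ⊢ <;> omega
  subst hyx
  cases x
  · exact .inr ⟨P, Q, h₁, by simpa using h₂⟩
  · exact .inr ⟨Q, P, by simpa using h₂, by simpa using h₁⟩

theorem Central.eq_replicate_or_isCentralSplit {C : List Bool} (h : Central C) :
    (∃ c, C = replicate C.length c) ∨ ∃ P Q, IsCentralSplit P Q C := by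
  obtain ⟨p, q, hpq, hp, hq, hlen⟩ := h
  rcases Nat.lt_or_ge p 2 with hp2 | hp2
  · obtain rfl | rfl : p = 0 ∨ p = 1 := by omega
    · simp at hpq; omega
    · exact .inl hp.exists_eq_replicate_of_one
  rcases Nat.lt_or_ge q 2 with hq2 | hq2
  · obtain rfl | rfl : q = 0 ∨ q = 1 := by omega
    · simp at hpq; omega
    · exact .inl hq.exists_eq_replicate_of_one
  obtain ⟨x, y, hxy⟩ := hp.exists_eq_take_append_cons_cons hp2 (by omega)
  obtain ⟨x', y', hxy'⟩ := hq.exists_eq_take_append_cons_cons hq2 (by omega)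
  rw [show C.length - p = q - 2 by omega] at hxy
  rw [show C.length - q = p - 2 by omega] at hxy'
  have hP : (C.take (p - 2)).length + 2 = p := by simp; omega
  have hQ : (C.take (q - 2)).length + 2 = q := by simp; omega
  exact eq_replicate_or_isCentralSplit_of_eq_append hxy hxy' (by rwa [hP, hQ])

theorem exists_conj_of_eq_replicate_or_isCentralSplit {C : List Bool}
    (h : (∃ c, C = replicate C.length c) ∨ ∃ P Q, IsCentralSplit P Q C) :
    ∃ x y : List Bool, false :: (C ++ [true]) = x ++ y ∧ true :: (C ++ [false]) = y ++ x := by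
  rcases h with ⟨c, hc⟩ | ⟨P, Q, h₁, h₂⟩
  · have hcomm : C ++ [c] = c :: C := by rw [hc, ← replicate_succ', replicate_succ]
    cases c
    · exact ⟨false :: C, [true], by simp, by simp [hcomm]⟩
    · exact ⟨[false], true :: C, by simp [hcomm], by simp⟩
  · exact ⟨false :: (P ++ [false]), true :: (Q ++ [true]), by simp [h₁], by simp [h₂]⟩

theorem eq_replicate_or_isCentralSplit_of_exists_conj {C : List Bool}
    (h : ∃ x y : List Bool, false :: (C ++ [true]) = x ++ y ∧ true :: (C ++ [false]) = y ++ x) :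
    (∃ c, C = replicate C.length c) ∨ ∃ P Q, IsCentralSplit P Q C := by
  obtain ⟨x, y, hxy, hyx⟩ := h
  obtain _ | ⟨a, x⟩ := x
  · rw [nil_append] at hxy
    simp [← hxy] at hyx
  obtain _ | ⟨b, y⟩ := y
  · rw [nil_append] at hyx
    simp [← hyx] at hxy
  simp only [cons_append, cons.injEq] at hxy hyx
  obtain ⟨rfl, hxy⟩ := hxy
  obtain ⟨rfl, hyx⟩ := hyx
  rcases eq_nil_or_concat x with rfl | ⟨P, a, rfl⟩
  · obtain rfl : y = C := by simpa using hyx.symm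
    obtain ⟨c, hc⟩ := (hasPeriod_of_eq_append (t := [true]) rfl hxy).exists_eq_replicate_of_one
    exact .inl ⟨c, (append_eq_replicate_iff.1 hc).2.1⟩
  rcases eq_nil_or_concat y with rfl | ⟨Q, b, rfl⟩
  · obtain rfl : C = P.concat a := append_inj_left' hxy rfl
    rw [nil_append] at hyx
    obtain ⟨c, hc⟩ := (hasPeriod_of_eq_append (t := [false]) rfl hyx).exists_eq_replicate_of_one
    exact .inl ⟨c, (append_eq_replicate_iff.1 hc).2.1⟩
  obtain ⟨hC₁, hb⟩ := append_inj' (hxy.trans (by simp : _ = (P ++ a :: true :: Q) ++ [b])) rfl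
  obtain ⟨hC₂, ha⟩ := append_inj' (hyx.trans (by simp : _ = (Q ++ b :: false :: P) ++ [a])) rfl
  simp only [cons.injEq, and_true] at ha hb
  subst ha hb
  exact .inr ⟨P, Q, hC₁, hC₂⟩

theorem central_iff_eq_replicate_or_isCentralSplit {C : List Bool} :
    Central C ↔ (∃ c, C = replicate C.length c) ∨ ∃ P Q, IsCentralSplit P Q C := by
  refine ⟨Central.eq_replicate_or_isCentralSplit, ?_⟩
  rintro (⟨c, hc⟩ | ⟨P, Q, h⟩)
  · exact hc ▸ central_replicate _ _
  · exact h.central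

/-- `C` is central iff `0C1` and `1C0` are conjugates. -/
theorem stmt5 (C : List Bool) :
    Central C ↔ ∃ x y : List Bool,
      false :: (C ++ [true]) = x ++ y ∧ true :: (C ++ [false]) = y ++ x :=
  central_iff_eq_replicate_or_isCentralSplit.trans
    ⟨exists_conj_of_eq_replicate_or_isCentralSplit, eq_replicate_or_isCentralSplit_of_exists_conj⟩
end

section
/- For every pair of coprime positive integers a, b, the primitive lower Christoffel word w_{a,b} is the lexicographically greatest word among all Lyndon words over {0,1} (with 0 < 1) having Parikh vector (a,b). -/
theorem List.lex_lt_of_count_take_le :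
    ∀ {x y : List Bool},
      (∀ i ≤ min x.length y.length, (x.take i).count true ≤ (y.take i).count true) →
      (∃ i ≤ min x.length y.length, (x.take i).count true < (y.take i).count true) →
      List.Lex (· < ·) x y
  | [], _, _, ⟨i, hi, hlt⟩ | _ :: _, [], _, ⟨i, hi, hlt⟩ => by simp_all
  | c :: x, d :: y, hle, ⟨i, hi, hlt⟩ => by
    by_cases hcd : c = d
    · subst hcd
      cases i with
      | zero => simp at hlt
      | succ i =>
        simp only [List.take_succ_cons, List.count_cons] at hlt
        refine List.Lex.cons
          (lex_lt_of_count_take_le (fun k hk => ?_) ⟨i, by simpa using hi, by omega⟩)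
        have := hle (k + 1) (by simpa using hk)
        simp only [List.take_succ_cons, List.count_cons] at this
        omega
    · obtain ⟨rfl, rfl⟩ : c = false ∧ d = true := by
        have := hle 1 (by simp)
        cases c <;> cases d <;> simp_all
      exact List.Lex.rel (by decide)

theorem List.exists_count_take_ne_of_ne :
    ∀ {x y : List Bool}, x.length = y.length → x ≠ y →
      ∃ i ≤ x.length, (x.take i).count true ≠ (y.take i).count true
  | [], [], _, hne => absurd rfl hne
  | c :: x, d :: y, hlen, hne => by
    by_cases hcd : c = d
    · subst hcd
      obtain ⟨i, hi, hcount⟩ :=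
        exists_count_take_ne_of_ne (x := x) (y := y) (by simpa using hlen) (by simpa using hne)
      exact ⟨i + 1, by simpa using hi, by simpa [List.count_cons] using hcount⟩
    · exact ⟨1, by simp, by cases c <;> cases d <;> simp_all⟩

theorem List.eq_or_lex_lt_of_count_take_le {x y : List Bool} (hlen : x.length = y.length)
    (hle : ∀ i ≤ x.length, (x.take i).count true ≤ (y.take i).count true) :
    x = y ∨ List.Lex (· < ·) x y := by
  refine or_iff_not_imp_left.mpr fun hne =>
    List.lex_lt_of_count_take_le (by simpa [hlen] using hle) ?_
  obtain ⟨i, hi, hcount⟩ := List.exists_count_take_ne_of_ne hlen hne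
  exact ⟨i, by simpa [hlen] using hi, lt_of_le_of_ne (hle i hi) hcount⟩

theorem Lyndon.eq_or_lex_lt_rotate {α : Type*} [LinearOrder α] {w : List α} (hw : Lyndon w)
    (j : ℕ) : w = w.rotate j ∨ List.Lex (· < ·) w (w.rotate j) := by
  have hpos : 0 < w.length := List.length_pos_iff.mpr hw.1
  rw [List.rotate_eq_drop_append_take_mod]
  rcases Nat.eq_zero_or_pos (j % w.length) with h0 | hj
  · simp [h0]
  · refine Or.inr (List.Lex.append_right _ _ (hw.2 _ _ (List.take_append_drop _ w).symm ?_ ?_))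
    · simpa using ⟨hj.ne', hw.1⟩
    · simpa using Nat.mod_lt j hpos

theorem List.take_rotate_eq_take_drop_append_self {α : Type*} {w : List α} {i j : ℕ}
    (hj : j ≤ w.length) (hi : i ≤ w.length) : (w.rotate j).take i = ((w ++ w).drop j).take i := by
  rw [List.rotate_eq_drop_append_take hj, List.drop_append_of_le_length hj, List.take_append,
    List.take_append, List.take_take, List.length_drop]
  congr 2
  omega

theorem List.exists_rotate_count_take_le (w : List Bool) :
    ∃ j, ∀ i ≤ w.length, w.length * ((w.rotate j).take i).count true ≤ i * w.count true := by
  set n := w.length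
  set b := w.count true
  -- `T k / n` is how far the first `k` letters of `w ++ w` lie below the line of slope `b / n`;
  -- `T` is `n`-periodic, and the rotation starting at a minimum of `T` stays below the line.
  set T : ℕ → ℤ := fun k => k * b - n * ((w ++ w).take k).count true with hT
  have hperiodic : ∀ k ≤ n, T (n + k) = T k := by
    intro k hk
    have htake : (w ++ w).take n = w := List.take_left' rfl
    have hdrop : (w ++ w).drop n = w := List.drop_left' rfl
    simp only [hT, List.take_add, htake, hdrop, List.count_append,
      List.take_append_of_le_length hk]
    push_cast
    ring
  obtain ⟨j, hj_mem, hmin⟩ := Finset.exists_min_image (Finset.range (n + 1)) T ⟨0, by simp⟩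
  have hj : j ≤ n := Finset.mem_range_succ_iff.mp hj_mem
  have hmin' : ∀ m ≤ 2 * n, T j ≤ T m := by
    intro m hm
    rcases le_or_gt m n with h | h
    · exact hmin m (Finset.mem_range_succ_iff.mpr h)
    · obtain ⟨k, rfl⟩ := Nat.exists_eq_add_of_lt h
      rw [show n + k + 1 = n + (k + 1) by ring, hperiodic _ (by omega)]
      exact hmin _ (Finset.mem_range_succ_iff.mpr (by omega))
  refine ⟨j, fun i hi => ?_⟩
  have hsplit : ((w ++ w).take (j + i)).count true
      = ((w ++ w).take j).count true + (((w ++ w).drop j).take i).count true := by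
    rw [List.take_add, List.count_append]
  have := hmin' (j + i) (by omega)
  simp only [hT, hsplit] at this
  rw [List.take_rotate_eq_take_drop_append_self hj hi]
  push_cast at this
  zify
  linarith

theorem Nat.div_add_sub_mul_div_add_one_of_not_dvd {n j b : ℕ} (hj : j ≤ n)
    (hdvd : ¬ n ∣ j * b) : j * b / n + (n - j) * b / n + 1 = b := by
  have hpos : 0 < n := Nat.pos_of_ne_zero fun hn => hdvd (by simp [hn, show j = 0 by omega])
  have hsum : j * b + (n - j) * b = n * b := by rw [← add_mul, Nat.add_sub_cancel' hj]
  rw [← Nat.add_div_eq_of_le_mod_add_mod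
    (Nat.le_mod_add_mod_of_dvd_add_of_not_dvd (hsum ▸ Dvd.intro b rfl) hdvd) hpos,
    hsum, Nat.mul_div_cancel_left b hpos]

theorem length_chr (a b : ℕ) : (chr a b).length = a + b := List.length_ofFn

theorem count_take_chr {a b i : ℕ} (hi : i ≤ a + b) :
    ((chr a b).take i).count true = i * b / (a + b) := by
  induction i with
  | zero => simp
  | succ i ih =>
    have hmono : i * b / (a + b) ≤ (i + 1) * b / (a + b) :=
      Nat.div_le_div_right (by gcongr; omega)
    have hstep : (i + 1) * b / (a + b) ≤ i * b / (a + b) + 1 := calc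
      (i + 1) * b / (a + b) ≤ (i * b + (a + b)) / (a + b) := Nat.div_le_div_right (by linarith)
      _ = i * b / (a + b) + 1 := Nat.add_div_right _ (by omega)
    rw [List.take_add_one, List.count_append, ih (by omega), chr, List.getElem?_ofFn,
      dif_pos (by omega)]
    by_cases h : i * b / (a + b) < (i + 1) * b / (a + b) <;> simp [h] <;> omega

theorem count_true_chr (a b : ℕ) : (chr a b).count true = b := by
  have h := count_take_chr (le_refl (a + b))
  rw [List.take_of_length_le (length_chr a b).le] at h
  rw [h]
  rcases Nat.eq_zero_or_pos (a + b) with hn | hn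
  · simp [show b = 0 by omega]
  · exact Nat.mul_div_cancel_left b hn

theorem count_false_chr (a b : ℕ) : (chr a b).count false = a := by
  have := List.count_false_add_count_true (chr a b)
  rw [count_true_chr, length_chr] at this
  omega

theorem count_take_drop_chr {a b i j : ℕ} (h : j + i ≤ a + b) :
    (((chr a b).drop j).take i).count true = (j + i) * b / (a + b) - j * b / (a + b) := by
  rw [← count_take_chr h, ← count_take_chr (le_of_add_le_left h), List.take_add,
    List.count_append, Nat.add_sub_cancel_left]

theorem lyndon_chr {a b : ℕ} (hab : a.Coprime b) : Lyndon (chr a b) := by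
  have hpos : 0 < a + b := by
    by_contra h
    obtain ⟨rfl, rfl⟩ : a = 0 ∧ b = 0 := by omega
    exact Nat.not_coprime_zero_zero hab
  refine ⟨List.ne_nil_of_length_pos (by rwa [length_chr]), fun u v huv hu hv => ?_⟩
  have hlen := congrArg List.length huv
  rw [List.length_append, length_chr] at hlen
  have hu := List.length_pos_iff.mpr hu
  have hv := List.length_pos_iff.mpr hv
  obtain rfl : v = (chr a b).drop u.length := by rw [huv, List.drop_left]
  set j := u.length
  have hcarry : j * b / (a + b) + (a + b - j) * b / (a + b) + 1 = b :=
    Nat.div_add_sub_mul_div_add_one_of_not_dvd (by omega) fun hdvd => by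
      have := Nat.le_of_dvd hu ((Nat.coprime_add_self_left.mpr hab).dvd_of_dvd_mul_right hdvd)
      omega
  apply List.lex_lt_of_count_take_le
  · intro i hi
    simp only [List.length_drop, length_chr] at hi
    rw [count_take_chr (by omega), count_take_drop_chr (by omega)]
    have := Nat.div_add_div_le_add_div (x := j * b) (y := i * b) (z := a + b)
    rw [← add_mul] at this
    omega
  · refine ⟨a + b - j, by simp [length_chr], ?_⟩
    rw [count_take_chr (by omega), count_take_drop_chr (by omega),
      Nat.add_sub_cancel' (by omega), Nat.mul_div_cancel_left b hpos]
    omega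

theorem eq_or_lex_lt_chr_of_count_take_le {a b : ℕ} {r : List Bool} (hlen : r.length = a + b)
    (hdensity : ∀ i ≤ a + b, (a + b) * (r.take i).count true ≤ i * b) :
    r = chr a b ∨ List.Lex (· < ·) r (chr a b) := by
  refine List.eq_or_lex_lt_of_count_take_le (hlen.trans (length_chr a b).symm) fun i hi => ?_
  rw [hlen] at hi
  rw [count_take_chr hi]
  rcases Nat.eq_zero_or_pos i with rfl | hi0
  · simp
  · exact (Nat.le_div_iff_mul_le (by omega)).mpr (by linarith [hdensity i hi])

theorem stmt8_general {a b : ℕ} (hab : Nat.Coprime a b) :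
    Lyndon (chr a b) ∧ (chr a b).count false = a ∧ (chr a b).count true = b ∧
    ∀ w : List Bool, Lyndon w → w.count false = a → w.count true = b →
      w = chr a b ∨ List.Lex (· < ·) w (chr a b) := by
  refine ⟨lyndon_chr hab, count_false_chr a b, count_true_chr a b, fun w hw hw0 hw1 => ?_⟩
  have hlen : w.length = a + b := by rw [← List.count_false_add_count_true, hw0, hw1]
  obtain ⟨j, hj⟩ := w.exists_rotate_count_take_le
  rw [hlen, hw1] at hj
  have hrot := eq_or_lex_lt_chr_of_count_take_le ((w.length_rotate j).trans hlen) hj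
  rcases hw.eq_or_lex_lt_rotate j with heq | hlt <;> rcases hrot with heq' | hlt'
  · exact Or.inl (heq.trans heq')
  · exact Or.inr (heq ▸ hlt')
  · exact Or.inr (heq' ▸ hlt)
  · exact Or.inr (List.lex_trans lt_trans hlt hlt')

/-- For coprime positive integers `a`, `b`, the lower Christoffel word `w_{a,b}` is
the lexicographically greatest Lyndon word with Parikh vector `(a, b)`. -/
theorem stmt8 {a b : ℕ} (ha : 0 < a) (hb : 0 < b) (hab : Nat.Coprime a b) :
    Lyndon (chr a b) ∧ (chr a b).count false = a ∧ (chr a b).count true = b ∧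
    ∀ w : List Bool, Lyndon w → w.count false = a → w.count true = b →
      w = chr a b ∨ List.Lex (· < ·) w (chr a b) :=
  stmt8_general hab
end

section
/- Every factor of a digitally convex word is digitally convex. Equivalently: if wx (or xw) is digitally convex for a letter x, then w is digitally convex. -/
/-!
Cut a factor out of a word `ℓ₁ ℓ₂ ⋯ ℓₙ` given by its Lyndon factorization: it consists of a
suffix `t` of some `ℓᵢ`, whole factors `ℓᵢ₊₁ ⋯ ℓⱼ₋₁` and a prefix `p` of some `ℓⱼ`. Factorize
`t` and `p` into Lyndon words (Chen–Fox–Lyndon); their factors are factors of `ℓᵢ`, `ℓⱼ`, hence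
balanced. Gluing the three factorizations keeps the sequence non-increasing because a nonempty
suffix of a Lyndon word `ℓ` is `≥ ℓ` and a prefix of `ℓ` is `≤ ℓ`.
-/

namespace List

variable {α : Type*}

theorem isSuffix_append_cases {u a b : List α} (h : u <:+ a ++ b) :
    u <:+ b ∨ ∃ t, t <:+ a ∧ u = t ++ b := by
  obtain ⟨s, hs⟩ := h
  rcases append_eq_append_iff.mp hs with ⟨t, rfl, rfl⟩ | ⟨c, rfl, hb⟩
  · exact .inr ⟨t, suffix_append s t, rfl⟩
  · exact .inl ⟨c, hb.symm⟩

theorem isPrefix_append_cases {u a b : List α} (h : u <+: a ++ b) :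
    u <+: a ∨ ∃ p, p <+: b ∧ u = a ++ p := by
  obtain ⟨s, hs⟩ := h
  rcases append_eq_append_iff.mp hs with ⟨c, rfl, -⟩ | ⟨p, rfl, rfl⟩
  · exact .inl (prefix_append u c)
  · exact .inr ⟨p, prefix_append p s, rfl⟩

theorem isSuffix_flatten_of_mem_getLast? {M : List (List α)} {l : List α}
    (hl : l ∈ M.getLast?) : l <:+ M.flatten := by
  obtain ⟨M, rfl⟩ := getLast?_eq_some_iff.mp hl
  simp

theorem isPrefix_flatten_of_mem_head? {M : List (List α)} {l : List α}
    (hl : l ∈ M.head?) : l <+: M.flatten := by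
  obtain ⟨M, rfl⟩ := head?_eq_some_iff.mp hl
  simp

variable [LinearOrder α] in
/-- A strict comparison not due to `u` being a prefix of `s` is decided at a position inside
`u`, so it survives appending arbitrary words. -/
theorem append_lt_append_of_lt_of_not_isPrefix {u s : List α} (h : u < s) (hp : ¬u <+: s)
    (v w : List α) : u ++ v < s ++ w := by
  induction u generalizing s with
  | nil => exact absurd nil_prefix hp
  | cons a u ih =>
    cases h with
    | rel hab => exact Lex.rel hab
    | cons h => exact Lex.cons (ih h fun hc => hp (cons_prefix_cons.mpr ⟨rfl, hc⟩))

end List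

open List

section LyndonFactorization

variable {α : Type*} [LinearOrder α]

theorem Lyndon.ne_nil {x : List α} (hx : Lyndon x) : x ≠ [] := hx.1

theorem Lyndon.lt_of_isSuffix {x s : List α} (hx : Lyndon x) (hs : s <:+ x) (hs₀ : s ≠ [])
    (hne : s ≠ x) : x < s := by
  obtain ⟨q, rfl⟩ := hs
  exact hx.2 q s rfl (by rintro rfl; simp at hne) hs₀

theorem Lyndon.le_of_isSuffix {x s : List α} (hx : Lyndon x) (hs : s <:+ x) (hs₀ : s ≠ []) :
    x ≤ s := by
  rcases eq_or_ne s x with rfl | hne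
  · exact le_rfl
  · exact (hx.lt_of_isSuffix hs hs₀ hne).le

theorem lyndon_singleton (a : α) : Lyndon [a] := by
  refine ⟨cons_ne_nil a [], fun u v h hu hv => ?_⟩
  have := congrArg length h
  simp only [length_singleton, length_append] at this
  have := length_pos_iff.mpr hu
  have := length_pos_iff.mpr hv
  omega

theorem Lyndon.append {u v : List α} (hu : Lyndon u) (hv : Lyndon v) (huv : u < v) :
    Lyndon (u ++ v) := by
  have huv_lt_v : u ++ v < v := by
    by_cases hp : u <+: v
    · obtain ⟨v', rfl⟩ := hp
      have hv' : v' ≠ [] := by rintro rfl; simp at huv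
      exact append_left_lt (hv.2 u v' rfl hu.ne_nil hv')
    · simpa using append_lt_append_of_lt_of_not_isPrefix huv hp v []
  refine ⟨by simp [hu.ne_nil], fun a b hab ha hb => ?_⟩
  rcases isSuffix_append_cases (⟨a, hab.symm⟩ : b <:+ u ++ v) with hbv | ⟨t, ht, rfl⟩
  · exact huv_lt_v.trans_le (hv.le_of_isSuffix hbv hb)
  · rcases eq_or_ne t [] with rfl | ht₀
    · simpa using huv_lt_v
    have htu : t ≠ u := by
      rintro rfl
      simpa [ha] using congrArg length hab
    have hut : ¬u <+: t := fun hp =>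
      htu (hp.eq_of_length (hp.length_le.antisymm ht.length_le)).symm
    exact append_lt_append_of_lt_of_not_isPrefix (hu.lt_of_isSuffix ht ht₀ htu) hut v v

/-- Appending a Lyndon word `x` to a Lyndon factorization: merge `x` with the last factors as
long as they are smaller. -/
theorem exists_lyndon_factorization_append (L : List (List α)) (hL : ∀ y ∈ L, Lyndon y)
    (hLc : L.IsChain (· ≥ ·)) {x : List α} (hx : Lyndon x) :
    ∃ M : List (List α), M.flatten = L.flatten ++ x ∧ (∀ y ∈ M, Lyndon y) ∧
      M.IsChain (· ≥ ·) := by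
  induction L using reverseRecOn generalizing x with
  | nil => exact ⟨[x], by simp, by simpa using hx, isChain_singleton x⟩
  | append_singleton L ℓ ih =>
    have hℓ : Lyndon ℓ := hL ℓ (by simp)
    obtain ⟨hLc', -, -⟩ := isChain_append.mp hLc
    by_cases hℓx : ℓ < x
    · obtain ⟨M, hM, hMl, hMc⟩ :=
        ih (fun y hy => hL y (by simp [hy])) hLc' (hℓ.append hx hℓx)
      exact ⟨M, by simp [hM], hMl, hMc⟩
    · refine ⟨L ++ [ℓ] ++ [x], by simp, fun y hy => ?_, ?_⟩
      · rcases mem_append.mp hy with hy | hy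
        · exact hL y hy
        · simp only [mem_singleton] at hy
          exact hy ▸ hx
      · refine isChain_append.mpr ⟨hLc, isChain_singleton x, ?_⟩
        simpa using not_lt.mp hℓx

theorem exists_lyndon_factorization (w : List α) :
    ∃ L : List (List α), L.flatten = w ∧ (∀ x ∈ L, Lyndon x) ∧ L.IsChain (· ≥ ·) := by
  induction w using reverseRecOn with
  | nil => exact ⟨[], rfl, by simp, isChain_nil⟩
  | append_singleton w a ih =>
    obtain ⟨L, rfl, hL, hLc⟩ := ih
    exact exists_lyndon_factorization_append L hL hLc (lyndon_singleton a)

def HasLyndonFactorization (P : List α → Prop) (w : List α) : Prop :=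
  ∃ L : List (List α), L.flatten = w ∧ (∀ x ∈ L, Lyndon x ∧ P x) ∧ L.IsChain (· ≥ ·)

variable {P : List α → Prop} (hP : ∀ ⦃x y : List α⦄, P x → y <:+: x → P y)
include hP

theorem hasLyndonFactorization_of_isInfix {x t : List α} (hx : P x) (ht : t <:+: x) :
    HasLyndonFactorization P t := by
  obtain ⟨M, rfl, hM, hMc⟩ := exists_lyndon_factorization t
  exact ⟨M, rfl, fun y hy => ⟨hM y hy, hP hx ((infix_of_mem_flatten hy).trans ht)⟩, hMc⟩

theorem HasLyndonFactorization.of_isSuffix {w u : List α} (hw : HasLyndonFactorization P w)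
    (hu : u <:+ w) : HasLyndonFactorization P u := by
  obtain ⟨L, rfl, hL, hLc⟩ := hw
  induction L with
  | nil => exact ⟨[], by simpa using hu, by simp, isChain_nil⟩
  | cons x L ih =>
    have hx := hL x mem_cons_self
    obtain ⟨hxL, hLc'⟩ := isChain_cons.mp hLc
    rcases isSuffix_append_cases (flatten_cons ▸ hu) with hu | ⟨t, ht, rfl⟩
    · exact ih hu (fun y hy => hL y (mem_cons_of_mem x hy)) hLc'
    obtain ⟨M, rfl, hM, hMc⟩ := hasLyndonFactorization_of_isInfix hP hx.2 ht.isInfix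
    refine ⟨M ++ L, flatten_append, fun y hy => ?_, isChain_append.mpr ⟨hMc, hLc', ?_⟩⟩
    · rcases mem_append.mp hy with hy | hy
      · exact hM y hy
      · exact hL y (mem_cons_of_mem x hy)
    · intro l hl y hy
      have hl₀ : l ≠ [] := (hM l (mem_of_mem_getLast? hl)).1.ne_nil
      have hlx : l <:+ x := (isSuffix_flatten_of_mem_getLast? hl).trans ht
      exact (hxL y hy).trans (hx.1.le_of_isSuffix hlx hl₀)

theorem HasLyndonFactorization.of_isPrefix {w u : List α} (hw : HasLyndonFactorization P w)
    (hu : u <+: w) : HasLyndonFactorization P u := by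
  obtain ⟨L, rfl, hL, hLc⟩ := hw
  induction L using reverseRecOn with
  | nil => exact ⟨[], by simpa using hu, by simp, isChain_nil⟩
  | append_singleton L x ih =>
    have hx := hL x (by simp)
    obtain ⟨hLc', -, hLx⟩ := isChain_append.mp hLc
    rw [flatten_append, flatten_singleton] at hu
    rcases isPrefix_append_cases hu with hu | ⟨p, hp, rfl⟩
    · exact ih hu (fun y hy => hL y (by simp [hy])) hLc'
    obtain ⟨M, rfl, hM, hMc⟩ := hasLyndonFactorization_of_isInfix hP hx.2 hp.isInfix
    refine ⟨L ++ M, flatten_append, fun y hy => ?_, isChain_append.mpr ⟨hLc', hMc, ?_⟩⟩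
    · rcases mem_append.mp hy with hy | hy
      · exact hL y (by simp [hy])
      · exact hM y hy
    · intro l hl y hy
      -- core's `IsPrefix.le` is stated for the order `y ≤ x := ¬x < y` on lists
      have hyx : y ≤ x := not_lt.mp ((isPrefix_flatten_of_mem_head? hy).trans hp).le
      exact hyx.trans (hLx l hl x (by simp))

theorem HasLyndonFactorization.of_isInfix {w u : List α} (hw : HasLyndonFactorization P w)
    (hu : u <:+: w) : HasLyndonFactorization P u := by
  obtain ⟨s, t, rfl⟩ := hu
  exact ((hw.of_isSuffix hP ⟨s, (append_assoc s u t).symm⟩).of_isPrefix hP (prefix_append u t))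

end LyndonFactorization

theorem Balanced01.of_isInfix {x y : List Bool} (hx : Balanced01 x) (hy : y <:+: x) :
    Balanced01 y :=
  fun u v hu hv => hx u v (hu.trans hy) (hv.trans hy)

theorem dc_iff_hasLyndonFactorization (w : List Bool) :
    DC w ↔ HasLyndonFactorization Balanced01 w := by
  simp only [DC, HasLyndonFactorization, ge_iff_le, ← not_lt]
  rfl

/-- Every factor of a digitally convex word is digitally convex. -/
theorem stmt11 (w u : List Bool) (hw : DC w) (hu : u <:+: w) : DC u := by
  rw [dc_iff_hasLyndonFactorization] at hw ⊢
  exact hw.of_isInfix (fun _ _ => Balanced01.of_isInfix) hu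
end
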